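/- Let A : ℝ → SL(3,ℝ) be a C² solution of A'' = Λ(A,A')A⁻ᵀ with Λ(A,A') = tr((A'A⁻¹)²)/tr(A⁻ᵀA⁻¹), and suppose Λ(A(t),A'(t)) ≥ 0 for all t ≥ T and E_K(0) = (1/2)tr(A'(0)A'(0)ᵀ) > 0. Then there exist constants 0 < c ≤ C with c(1+|t|)² ≤ tr(A(t)A(t)ᵀ) ≤ C(1+|t|)² for all t ≥ T. -/

import Mathlib

/-!
Put X = tr(A Aᵀ), Y = tr(A' Aᵀ) and E = tr(A' A'ᵀ). The equation A'' = Λ A⁻ᵀ gives X' = 2Y and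
Y' = 3Λ + E, while E' = 2Λ tr(A⁻¹ A') vanishes by Jacobi's formula because det A ≡ 1. For
B = A'A⁻¹ we have tr(B²) ≤ ‖B‖² in the submultiplicative Frobenius norm, so Λ ≤ E and hence
2E ≤ X'' ≤ 8E on [T, ∞). Integrating twice traps X between two quadratics in t - T with positive
leading coefficients, and positivity of X on a compact initial interval turns this into the
two-sided bound by (1 + |t|)².
-/

open Matrix Filter Topology
noncomputable section
attribute [local instance] Matrix.normedAddCommGroup Matrix.normedSpace

abbrev M3 := Matrix (Fin 3) (Fin 3) ℝ

/-- The coefficient Λ(A,A') = tr((A'A⁻¹)²)/tr(A⁻ᵀA⁻¹) for incompressible affine motion. -/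
def Lam (A A' : M3) : ℝ :=
  Matrix.trace ((A' * A⁻¹) * (A' * A⁻¹)) / Matrix.trace ((A⁻¹)ᵀ * A⁻¹)

namespace Matrix

variable {n : Type*} [Fintype n]

lemma trace_mul_transpose_eq_sum (A B : Matrix n n ℝ) :
    trace (A * Bᵀ) = ∑ i, ∑ j, A i j * B i j := by
  simp [trace, mul_apply]

lemma hasDerivAt_trace_mul_transpose {A B : ℝ → Matrix n n ℝ} {A' B' : Matrix n n ℝ} {t : ℝ}
    (hA : HasDerivAt A A' t) (hB : HasDerivAt B B' t) :
    HasDerivAt (fun s => trace (A s * (B s)ᵀ)) (trace (A' * (B t)ᵀ) + trace (A t * B'ᵀ)) t := by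
  simp only [trace_mul_transpose_eq_sum, ← Finset.sum_add_distrib]
  exact HasDerivAt.fun_sum fun i _ => HasDerivAt.fun_sum fun j _ =>
    (hasDerivAt_pi.1 (hasDerivAt_pi.1 hA i) j).mul (hasDerivAt_pi.1 (hasDerivAt_pi.1 hB i) j)

lemma trace_mul_transpose_comm (A B : Matrix n n ℝ) : trace (A * Bᵀ) = trace (B * Aᵀ) := by
  rw [← trace_transpose, transpose_mul, transpose_transpose]

lemma hasDerivAt_trace_mul_transpose_self {A : ℝ → Matrix n n ℝ} {A' : Matrix n n ℝ} {t : ℝ}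
    (hA : HasDerivAt A A' t) :
    HasDerivAt (fun s => trace (A s * (A s)ᵀ)) (2 * trace (A' * (A t)ᵀ)) t := by
  convert hasDerivAt_trace_mul_transpose hA hA using 1
  rw [trace_mul_transpose_comm (A t)]
  ring

lemma trace_mul_transpose_self_nonneg (A : Matrix n n ℝ) : 0 ≤ trace (A * Aᵀ) := by
  simpa using (posSemidef_self_mul_conjTranspose A).trace_nonneg

lemma trace_mul_transpose_self_pos {A : Matrix n n ℝ} (hA : A ≠ 0) : 0 < trace (A * Aᵀ) :=
  (trace_mul_transpose_self_nonneg A).lt_of_ne' <| by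
    simpa using (trace_mul_conjTranspose_self_eq_zero_iff (A := A)).not.2 hA

lemma trace_mul_self_le_trace_mul_transpose_self (B : Matrix n n ℝ) :
    trace (B * B) ≤ trace (B * Bᵀ) := by
  have h := trace_mul_transpose_self_nonneg (B - Bᵀ)
  simp only [transpose_sub, transpose_transpose, sub_mul, mul_sub, trace_sub] at h
  rw [trace_mul_comm Bᵀ B, ← transpose_mul, trace_transpose] at h
  linarith

lemma trace_mul_mul_transpose_le (B C : Matrix n n ℝ) :
    trace (B * C * (B * C)ᵀ) ≤ trace (B * Bᵀ) * trace (C * Cᵀ) := by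
  simp only [trace_mul_transpose_eq_sum, ← sq]
  calc ∑ i, ∑ j, (B * C) i j ^ 2 ≤ ∑ i, ∑ j, (∑ k, B i k ^ 2) * ∑ k, C k j ^ 2 :=
        Finset.sum_le_sum fun i _ => Finset.sum_le_sum fun j _ => by
          rw [mul_apply]; exact Finset.sum_mul_sq_le_sq_mul_sq _ _ _
    _ = (∑ i, ∑ k, B i k ^ 2) * ∑ k, ∑ j, C k j ^ 2 := by
        simp only [← Finset.mul_sum, ← Finset.sum_mul]
        rw [Finset.sum_comm (s := Finset.univ) (t := Finset.univ) (f := fun j k => C k j ^ 2)]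

variable [DecidableEq n]

lemma det_updateCol_eq_sum (A : Matrix n n ℝ) (i : n) (v : n → ℝ) :
    (A.updateCol i v).det = ∑ σ : Equiv.Perm n,
      ((Equiv.Perm.sign σ : ℤ) : ℝ) * ((∏ j ∈ Finset.univ.erase i, A (σ j) j) * v (σ i)) := by
  rw [det_apply']
  refine Finset.sum_congr rfl fun σ _ => ?_
  rw [← Finset.mul_prod_erase _ _ (Finset.mem_univ i), mul_comm (updateCol A i v (σ i) i)]
  congr 2
  · exact Finset.prod_congr rfl fun j hj => by simp [Finset.ne_of_mem_erase hj]
  · simp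

theorem hasDerivAt_det {A : ℝ → Matrix n n ℝ} {A' : Matrix n n ℝ} {t : ℝ}
    (hA : HasDerivAt A A' t) :
    HasDerivAt (fun s => (A s).det) (trace (adjugate (A t) * A')) t := by
  have hcol : ∀ i, (adjugate (A t) * A') i i = ((A t).updateCol i (fun k => A' k i)).det := by
    intro i
    rw [← cramer_apply, cramer_eq_adjugate_mulVec]
    rfl
  have hsum : trace (adjugate (A t) * A') = ∑ σ : Equiv.Perm n, ((Equiv.Perm.sign σ : ℤ) : ℝ) *
      ∑ i, (∏ j ∈ Finset.univ.erase i, A t (σ j) j) • A' (σ i) i := by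
    simp only [trace, diag, hcol, det_updateCol_eq_sum, smul_eq_mul, Finset.mul_sum]
    exact Finset.sum_comm
  simp only [det_apply', hsum]
  exact HasDerivAt.fun_sum fun σ _ => (HasDerivAt.fun_finsetProd fun i _ =>
    hasDerivAt_pi.1 (hasDerivAt_pi.1 hA (σ i)) i).const_mul _

lemma trace_inv_mul_eq_zero_of_det_eq_one {A : ℝ → Matrix n n ℝ} {A' : Matrix n n ℝ} {t : ℝ}
    (hA : HasDerivAt A A' t) (hdet : ∀ s, (A s).det = 1) : trace ((A t)⁻¹ * A') = 0 := by
  have h0 : HasDerivAt (fun s => (A s).det) 0 t := by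
    simpa only [hdet] using hasDerivAt_const t (1 : ℝ)
  rw [inv_def, hdet, Ring.inverse_one, one_smul]
  exact (hasDerivAt_det hA).unique h0

end Matrix

-- For singular `A` we have `A⁻¹ = 0`, and `Lam A A'` is the junk value `0 / 0 = 0`.
lemma Lam_le_trace_mul_transpose (A A' : M3) : Lam A A' ≤ trace (A' * A'ᵀ) := by
  rw [Lam, trace_mul_comm (A⁻¹)ᵀ]
  rcases (trace_mul_transpose_self_nonneg A⁻¹).eq_or_lt with h | h
  · rw [← h, div_zero]
    exact trace_mul_transpose_self_nonneg A'
  · rw [div_le_iff₀ h]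
    calc trace (A' * A⁻¹ * (A' * A⁻¹)) ≤ trace (A' * A⁻¹ * (A' * A⁻¹)ᵀ) :=
          trace_mul_self_le_trace_mul_transpose_self _
      _ ≤ _ := trace_mul_mul_transpose_le _ _

section AffineMotion

variable {n : Type*} [Fintype n] [DecidableEq n] {A : ℝ → Matrix n n ℝ} {p : ℝ} {t : ℝ}

lemma hasDerivAt_trace_deriv_mul_transpose (hA : HasDerivAt A (deriv A t) t)
    (hA' : HasDerivAt (deriv A) (deriv (deriv A) t) t)
    (hODE : deriv (deriv A) t = p • ((A t)⁻¹)ᵀ) (hdet : IsUnit (A t).det) :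
    HasDerivAt (fun s => trace (deriv A s * (A s)ᵀ))
      (Fintype.card n * p + trace (deriv A t * (deriv A t)ᵀ)) t := by
  convert hasDerivAt_trace_mul_transpose hA' hA using 2
  rw [hODE, smul_mul_assoc, trace_smul, ← transpose_mul, trace_transpose, mul_nonsing_inv _ hdet,
    trace_one, smul_eq_mul, mul_comm]

lemma hasDerivAt_trace_deriv_mul_transpose_deriv (hA : HasDerivAt A (deriv A t) t)
    (hA' : HasDerivAt (deriv A) (deriv (deriv A) t) t)
    (hODE : deriv (deriv A) t = p • ((A t)⁻¹)ᵀ) (hdet : ∀ s, (A s).det = 1) :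
    HasDerivAt (fun s => trace (deriv A s * (deriv A s)ᵀ)) 0 t := by
  convert hasDerivAt_trace_mul_transpose hA' hA' using 1
  rw [trace_mul_transpose_comm (deriv A t), ← two_mul, hODE, smul_mul_assoc, trace_smul,
    ← transpose_mul, trace_transpose, trace_mul_comm, trace_inv_mul_eq_zero_of_det_eq_one hA hdet]
  simp

end AffineMotion

section QuadraticGrowth

open Set

variable {f g f' g' f'' : ℝ → ℝ} {T t : ℝ}

lemma le_of_hasDerivAt_le (hf : ∀ t, HasDerivAt f (f' t) t) (hg : ∀ t, HasDerivAt g (g' t) t)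
    (hT : f T ≤ g T) (h : ∀ t, T ≤ t → f' t ≤ g' t) : ∀ t, T ≤ t → f t ≤ g t := fun t ht =>
  image_le_of_deriv_right_le_deriv_boundary (b := t)
    (HasDerivAt.continuousOn fun x _ => hf x) (fun x _ => (hf x).hasDerivWithinAt) hT
    (HasDerivAt.continuousOn fun x _ => hg x) (fun x _ => (hg x).hasDerivWithinAt)
    (fun x hx => h x hx.1) ⟨ht, le_rfl⟩

lemma hasDerivAt_taylor_quadratic (a b k T t : ℝ) :
    HasDerivAt (fun s => a + b * (s - T) + k * (s - T) ^ 2) (b + 2 * k * (t - T)) t := by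
  have hlin : HasDerivAt (fun s => s - T) 1 t := (hasDerivAt_id t).sub_const T
  refine (((hlin.const_mul b).const_add a).fun_add ((hlin.fun_pow 2).const_mul k)).congr_deriv ?_
  push_cast
  ring

lemma hasDerivAt_taylor_linear (b k T t : ℝ) :
    HasDerivAt (fun s => b + 2 * k * (s - T)) (2 * k) t := by
  simpa using (((hasDerivAt_id t).sub_const T).const_mul (2 * k)).const_add b

lemma quadratic_le_of_le_deriv2 (hf : ∀ t, HasDerivAt f (f' t) t)
    (hf' : ∀ t, HasDerivAt f' (f'' t) t) {k : ℝ} (hk : ∀ t, T ≤ t → 2 * k ≤ f'' t) :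
    ∀ t, T ≤ t → f T + f' T * (t - T) + k * (t - T) ^ 2 ≤ f t :=
  le_of_hasDerivAt_le (hasDerivAt_taylor_quadratic _ _ k T) hf (by simp)
    (le_of_hasDerivAt_le (hasDerivAt_taylor_linear _ k T) hf' (by simp) hk)

lemma le_quadratic_of_deriv2_le (hf : ∀ t, HasDerivAt f (f' t) t)
    (hf' : ∀ t, HasDerivAt f' (f'' t) t) {K : ℝ} (hK : ∀ t, T ≤ t → f'' t ≤ 2 * K) :
    ∀ t, T ≤ t → f t ≤ f T + f' T * (t - T) + K * (t - T) ^ 2 :=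
  le_of_hasDerivAt_le hf (hasDerivAt_taylor_quadratic _ _ K T) (by simp)
    (le_of_hasDerivAt_le hf' (hasDerivAt_taylor_linear _ K T) (by simp) hK)

lemma quarter_mul_sq_le_quadratic {a b e s : ℝ} (he : 0 < e)
    (hs : 2 + 4 * |a| / e + 4 * |b| / e ≤ s) : e / 4 * (1 + s) ^ 2 ≤ a + b * s + e * s ^ 2 := by
  have ha₀ : 0 ≤ 4 * |a| / e := by positivity
  have hb₀ : 0 ≤ 4 * |b| / e := by positivity
  have ha : 4 * |a| ≤ e * s := (div_le_iff₀' he).1 (by linarith)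
  have hb : 4 * |b| ≤ e * s := (div_le_iff₀' he).1 (by linarith)
  have h2 : 2 ≤ s := by linarith
  nlinarith [neg_abs_le a, neg_abs_le b, abs_nonneg b,
    mul_le_mul_of_nonneg_right hb (by linarith : (0 : ℝ) ≤ s)]

lemma exists_pos_mul_sq_le_of_quadratic_le (hf : ContinuousOn f (Ici T))
    (hpos : ∀ t, T ≤ t → 0 < f t) {a b e : ℝ} (he : 0 < e)
    (hlow : ∀ t, T ≤ t → a + b * (t - T) + e * (t - T) ^ 2 ≤ f t) :
    ∃ c, 0 < c ∧ ∀ t, T ≤ t → c * (1 + (t - T)) ^ 2 ≤ f t := by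
  set R := 2 + 4 * |a| / e + 4 * |b| / e
  have hR : 0 ≤ R := by positivity
  obtain ⟨t₀, ht₀, hmin⟩ := isCompact_Icc.exists_isMinOn (nonempty_Icc.2 (by linarith : T ≤ T + R))
    (hf.mono Icc_subset_Ici_self)
  have hft₀ : 0 < f t₀ := hpos t₀ ht₀.1
  refine ⟨min (e / 4) (f t₀ / (1 + R) ^ 2), by positivity, fun t ht => ?_⟩
  rcases le_or_gt t (T + R) with hnear | hfar
  · calc min (e / 4) (f t₀ / (1 + R) ^ 2) * (1 + (t - T)) ^ 2
          ≤ f t₀ / (1 + R) ^ 2 * (1 + R) ^ 2 := by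
            gcongr
            · exact min_le_right _ _
            · linarith
        _ = f t₀ := div_mul_cancel₀ _ (by positivity)
        _ ≤ f t := hmin ⟨ht, hnear⟩
  · calc min (e / 4) (f t₀ / (1 + R) ^ 2) * (1 + (t - T)) ^ 2
          ≤ e / 4 * (1 + (t - T)) ^ 2 := by gcongr; exact min_le_left _ _
        _ ≤ a + b * (t - T) + e * (t - T) ^ 2 := quarter_mul_sq_le_quadratic he (by linarith)
        _ ≤ f t := hlow t ht

lemma exists_le_mul_sq_of_le_quadratic {a b K : ℝ}
    (hup : ∀ t, T ≤ t → f t ≤ a + b * (t - T) + K * (t - T) ^ 2) :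
    ∃ C, ∀ t, T ≤ t → f t ≤ C * (1 + (t - T)) ^ 2 := by
  refine ⟨|a| + |b| + |K|, fun t ht => (hup t ht).trans ?_⟩
  have hs : 0 ≤ t - T := sub_nonneg.2 ht
  nlinarith [le_abs_self a, le_abs_self b, le_abs_self K, abs_nonneg a, abs_nonneg b,
    abs_nonneg K, sq_nonneg (t - T), mul_nonneg (abs_nonneg b) hs, mul_nonneg (abs_nonneg K) hs]

lemma one_add_sub_le_mul : 1 + (t - T) ≤ (1 + |T|) * (1 + |t|) := by
  nlinarith [le_abs_self t, neg_abs_le T, abs_nonneg t, abs_nonneg T,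
    mul_nonneg (abs_nonneg t) (abs_nonneg T)]

lemma one_add_abs_le_mul (ht : T ≤ t) : 1 + |t| ≤ (1 + |T|) * (1 + (t - T)) := by
  have : |t| ≤ |T| + (t - T) := by
    calc |t| = |T + (t - T)| := by ring_nf
      _ ≤ |T| + |t - T| := abs_add_le _ _
      _ = |T| + (t - T) := by rw [abs_of_nonneg (sub_nonneg.2 ht)]
  nlinarith [abs_nonneg T, mul_nonneg (abs_nonneg T) (sub_nonneg.2 ht)]

lemma exists_sq_bounds_of_quadratic_bounds (hf : ContinuousOn f (Ici T))
    (hpos : ∀ t, T ≤ t → 0 < f t) {a b e K : ℝ} (he : 0 < e)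
    (hlow : ∀ t, T ≤ t → a + b * (t - T) + e * (t - T) ^ 2 ≤ f t)
    (hup : ∀ t, T ≤ t → f t ≤ a + b * (t - T) + K * (t - T) ^ 2) :
    ∃ c C : ℝ, 0 < c ∧ c ≤ C ∧ ∀ t, T ≤ t →
      c * (1 + |t|) ^ 2 ≤ f t ∧ f t ≤ C * (1 + |t|) ^ 2 := by
  obtain ⟨c, hc, hlow'⟩ := exists_pos_mul_sq_le_of_quadratic_le hf hpos he hlow
  obtain ⟨C, hup'⟩ := exists_le_mul_sq_of_le_quadratic hup
  have hC : 0 ≤ C := by simpa using (hpos T le_rfl).le.trans (hup' T le_rfl)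
  set D := (1 + |T|) ^ 2 with hD
  have hDpos : 0 < D := by positivity
  have bounds : ∀ t, T ≤ t → c / D * (1 + |t|) ^ 2 ≤ f t ∧ f t ≤ C * D * (1 + |t|) ^ 2 := by
    intro t ht
    constructor
    · calc c / D * (1 + |t|) ^ 2 ≤ c / D * (D * (1 + (t - T)) ^ 2) := by
            rw [hD, ← mul_pow]; gcongr; exact one_add_abs_le_mul ht
        _ = c * (1 + (t - T)) ^ 2 := by field_simp
        _ ≤ f t := hlow' t ht
    · calc f t ≤ C * (1 + (t - T)) ^ 2 := hup' t ht
        _ ≤ C * D * (1 + |t|) ^ 2 := by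
            rw [hD, mul_assoc, ← mul_pow]; gcongr; exact one_add_sub_le_mul
  refine ⟨c / D, C * D, by positivity, ?_, bounds⟩
  obtain ⟨h₁, h₂⟩ := bounds T le_rfl
  exact le_of_mul_le_mul_right (h₁.trans h₂) (by positivity)

end QuadraticGrowth

/-- quadratic growth of tr(A Aᵀ) for incompressible affine motion
with nonnegative pressure coefficient for t ≥ T and positive kinetic energy. -/
theorem stmt19 (A : ℝ → M3) (T : ℝ)
    (hA : ContDiff ℝ 2 A)
    (hdet : ∀ t : ℝ, (A t).det = 1)
    (hODE : ∀ t : ℝ, deriv (deriv A) t = Lam (A t) (deriv A t) • ((A t)⁻¹)ᵀ)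
    (hΛ : ∀ t : ℝ, T ≤ t → 0 ≤ Lam (A t) (deriv A t))
    (hEK : 0 < (1/2) * Matrix.trace (deriv A 0 * (deriv A 0)ᵀ)) :
    ∃ c C : ℝ, 0 < c ∧ c ≤ C ∧ ∀ t : ℝ, T ≤ t →
      c * (1 + |t|) ^ 2 ≤ Matrix.trace (A t * (A t)ᵀ) ∧
      Matrix.trace (A t * (A t)ᵀ) ≤ C * (1 + |t|) ^ 2 := by
  have hA₁ : ∀ t, HasDerivAt A (deriv A t) t := fun t =>
    (hA.differentiable two_ne_zero t).hasDerivAt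
  have hA₂ : ∀ t, HasDerivAt (deriv A) (deriv (deriv A) t) t := fun t =>
    ((contDiff_succ_iff_deriv (n := 1)).1 hA |>.2.2.differentiable one_ne_zero t).hasDerivAt
  set E := trace (deriv A 0 * (deriv A 0)ᵀ)
  have hE' := fun t => hasDerivAt_trace_deriv_mul_transpose_deriv (hA₁ t) (hA₂ t) (hODE t) hdet
  have hE : ∀ t, trace (deriv A t * (deriv A t)ᵀ) = E := fun t =>
    is_const_of_deriv_eq_zero (fun s => (hE' s).differentiableAt) (fun s => (hE' s).deriv) t 0
  have hX := fun t => hasDerivAt_trace_mul_transpose_self (hA₁ t)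
  have hY := fun t => (hasDerivAt_trace_deriv_mul_transpose (hA₁ t) (hA₂ t) (hODE t)
    (by simp [hdet])).const_mul 2
  simp only [hE, Fintype.card_fin, Nat.cast_ofNat] at hY
  refine exists_sq_bounds_of_quadratic_bounds (HasDerivAt.continuousOn fun t _ => hX t)
    (fun t _ => trace_mul_transpose_self_pos fun h => by simpa [h] using hdet t) (e := E)
    (by linarith) (quadratic_le_of_le_deriv2 hX hY fun t ht => ?_)
    (le_quadratic_of_deriv2_le hX hY (K := 4 * E) fun t _ => ?_)
  · linarith [hΛ t ht]
  · linarith [Lam_le_trace_mul_transpose (A t) (deriv A t), hE t]
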